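/- If n unit-duration tasks of equal load Ŝ are greedily placed on T slots with initial loads Ẽ(t), then at every point during the algorithm the difference between the maximum and minimum slot loads is at most max( max_t Ẽ(t) − min_t Ẽ(t), Ŝ ). -/
import Mathlib

lemma card_step {α : Type*} [DecidableEq α] {n : ℕ} (σ : Fin n → α) (k : ℕ) (hk : k < n) (t : α) :
    (Finset.univ.filter (fun j : Fin n => (j : ℕ) < k + 1 ∧ σ j = t)).card =
      (Finset.univ.filter (fun j : Fin n => (j : ℕ) < k ∧ σ j = t)).card +
        (if σ ⟨k, hk⟩ = t then 1 else 0) := by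
  split_ifs with h
  · have hset : Finset.univ.filter (fun j : Fin n => (j : ℕ) < k + 1 ∧ σ j = t) =
        insert ⟨k, hk⟩ (Finset.univ.filter (fun j : Fin n => (j : ℕ) < k ∧ σ j = t)) := by
      ext j
      simp only [Finset.mem_filter, Finset.mem_univ, true_and, Finset.mem_insert]
      constructor
      · rintro ⟨hj, hjt⟩
        rcases Nat.lt_succ_iff_lt_or_eq.mp hj with hj' | hj'
        · exact Or.inr ⟨hj', hjt⟩
        · exact Or.inl (Fin.ext hj')
      · rintro (rfl | ⟨hj, hjt⟩)
        · exact ⟨Nat.lt_succ_self k, h⟩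
        · exact ⟨Nat.lt_succ_of_lt hj, hjt⟩
    rw [hset, Finset.card_insert_of_notMem]
    simp
  · rw [add_zero]
    congr 1
    ext j
    simp only [Finset.mem_filter, Finset.mem_univ, true_and]
    constructor
    · rintro ⟨hj, hjt⟩
      rcases Nat.lt_succ_iff_lt_or_eq.mp hj with hj' | hj'
      · exact ⟨hj', hjt⟩
      · exact absurd (by rw [← Fin.ext hj' (b := ⟨k, hk⟩)]; exact hjt) h
    · rintro ⟨hj, hjt⟩
      exact ⟨Nat.lt_succ_of_lt hj, hjt⟩

/-- During the greedy placement of `n` unit-duration tasks of equal load `Sh` on `T`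
slots with initial loads `Ẽ(t)`, at every point (after any number `k ≤ n` of
placements) the difference between the maximum and minimum slot loads is at most
`max(max_t Ẽ(t) − min_t Ẽ(t), Sh)`. -/
theorem stmt18 (T n : ℕ) (hT : 0 < T) (Sh : ℝ) (hSh : 0 < Sh)
    (Et : Fin T → ℝ) (hEt : ∀ t, 0 ≤ Et t)
    (σ : Fin n → Fin T)
    (hgreedy : ∀ k : Fin n, ∀ t : Fin T,
      Et (σ k) + Sh * ((Finset.univ.filter (fun j : Fin n => j < k ∧ σ j = σ k)).card : ℝ) ≤
        Et t + Sh * ((Finset.univ.filter (fun j : Fin n => j < k ∧ σ j = t)).card : ℝ)) :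
    ∀ k : ℕ, k ≤ n →
      Finset.univ.sup' (Finset.univ_nonempty_iff.mpr ⟨⟨0, hT⟩⟩)
          (fun t => Et t +
            Sh * ((Finset.univ.filter (fun j : Fin n => (j : ℕ) < k ∧ σ j = t)).card : ℝ)) -
        Finset.univ.inf' (Finset.univ_nonempty_iff.mpr ⟨⟨0, hT⟩⟩)
          (fun t => Et t +
            Sh * ((Finset.univ.filter (fun j : Fin n => (j : ℕ) < k ∧ σ j = t)).card : ℝ)) ≤
      max (Finset.univ.sup' (Finset.univ_nonempty_iff.mpr ⟨⟨0, hT⟩⟩) Et -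
            Finset.univ.inf' (Finset.univ_nonempty_iff.mpr ⟨⟨0, hT⟩⟩) Et) Sh := by
  have hne : (Finset.univ : Finset (Fin T)).Nonempty := Finset.univ_nonempty_iff.mpr ⟨⟨0, hT⟩⟩
  set f : ℕ → Fin T → ℝ := fun k t =>
    Et t + Sh * ((Finset.univ.filter (fun j : Fin n => (j : ℕ) < k ∧ σ j = t)).card : ℝ)
    with hf
  intro k
  induction k with
  | zero =>
    intro _
    have h0 : f 0 = Et := by
      funext t; simp only [hf]; norm_num
    rw [show (fun t => Et t +
        Sh * ((Finset.univ.filter (fun j : Fin n => (j : ℕ) < 0 ∧ σ j = t)).card : ℝ)) = f 0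
      from rfl, h0]
    exact le_max_left _ _
  | succ k ih =>
    intro hk1
    have hkn : k < n := hk1
    have IH := ih (Nat.le_of_lt hkn)
    set K : Fin n := ⟨k, hkn⟩ with hK
    -- step relation
    have hstep : ∀ t, f (k + 1) t = f k t + (if σ K = t then Sh else 0) := by
      intro t
      simp only [hf, card_step σ k hkn t]
      push_cast
      split_ifs <;> ring
    -- minimality of σ K at step k
    have hmin : ∀ t, f k (σ K) ≤ f k t := by
      intro t
      have := hgreedy K t
      have hlt : ∀ j : Fin n, (j < K) = ((j : ℕ) < k) := by
        intro j; simp [Fin.lt_def, hK]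
      simpa only [hf, hlt] using this
    -- monotonicity
    have hmono : ∀ t, f k t ≤ f (k + 1) t := by
      intro t
      rw [hstep t]
      have : (0:ℝ) ≤ if σ K = t then Sh else 0 := by positivity
      linarith
    have hinf_mono : Finset.univ.inf' hne (f k) ≤ Finset.univ.inf' hne (f (k + 1)) :=
      Finset.le_inf' hne _ (fun t _ => le_trans (Finset.inf'_le (f k) (Finset.mem_univ t)) (hmono t))
    -- sup bound
    have hsup : Finset.univ.sup' hne (f (k + 1)) ≤
        max (Finset.univ.sup' hne (f k)) (Finset.univ.inf' hne (f k) + Sh) := by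
      apply Finset.sup'_le
      intro t _
      rw [hstep t]
      by_cases h : σ K = t
      · rw [if_pos h]
        have h1 : f k t ≤ f k (σ K) := h ▸ le_refl _
        have h2 : f k (σ K) ≤ Finset.univ.inf' hne (f k) :=
          Finset.le_inf' hne _ (fun t' _ => hmin t')
        have := le_trans h1 h2
        exact le_trans (by linarith) (le_max_right _ _)
      · rw [if_neg h, add_zero]
        exact le_trans (Finset.le_sup' (f k) (Finset.mem_univ t)) (le_max_left _ _)
    -- conclude
    have hShle : Sh ≤ max (Finset.univ.sup' hne Et - Finset.univ.inf' hne Et) Sh :=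
      le_max_right _ _
    rcases max_cases (Finset.univ.sup' hne (f k)) (Finset.univ.inf' hne (f k) + Sh) with
      ⟨heq, _⟩ | ⟨heq, _⟩ <;> rw [heq] at hsup <;> linarith
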